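/- The category of associative n-algebras over a field k of characteristic zero has an initial object (A_n, λ_n), and A_n can be described as the free associative (tensor) algebra on planar n-trees, i.e. rooted trees with edges coloured by {1,…,n} and, at each vertex, a separate linear ordering of the incoming edges of each colour, with λ_n the grafting operation on n-tuples of ordered forests. -/

import Mathlib

/-!
Every planar `n`-tree is the grafting of the `n`-tuple of ordered forests of subtrees hanging
from its root by edges of each colour, and these forests are determined by the tree. Hence a
morphism to an `n`-algebra `(B, β)` must send a tree to `β` applied to the products of the
images of its forests; read as a recursion on trees, this defines the unique morphism. The
grafting map itself is defined on the basis of `A_n^{⊗n}` given by `n`-tuples of words of trees.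
-/

namespace CTrees

inductive PTree (n : ℕ) : Type where
  | node : List (Fin n × PTree n) → PTree n

/-- Two representatives define the same planar `n`-tree: at each vertex, the
incoming edges of each colour are linearly ordered, but the interleaving of
the different colours is immaterial. -/
inductive PlEquiv {n : ℕ} : PTree n → PTree n → Prop where
  | node {l₁ l₂ : List (Fin n × PTree n)}
      (h : ∀ i : Fin n, List.Forall₂ PlEquiv
        ((l₁.filter fun p => p.1 = i).map Prod.snd)
        ((l₂.filter fun p => p.1 = i).map Prod.snd)) :
      PlEquiv (.node l₁) (.node l₂)

/-- Planar `n`-trees: rooted trees with edges coloured by `{1,…,n}` and, at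
each vertex, a linear ordering of the incoming edges of each colour. -/
def PlTree (n : ℕ) : Type := Quot (@PlEquiv n)

variable {n : ℕ} (k : Type) [CommRing k]

/-- The element of the free associative algebra `A_n` given by a word of
planar `n`-trees. -/
noncomputable def wmon (w : List (PlTree n)) : FreeAlgebra k (PlTree n) :=
  (w.map (FreeAlgebra.ι k)).prod

/-- Grafting of an `n`-tuple of ordered forests (words of planar trees). -/
noncomputable def pgraftW (g : Fin n → List (PlTree n)) : PlTree n :=
  Quot.mk _ (PTree.node
    ((List.finRange n).flatMap fun i => (g i).map fun t => (i, Quot.out t)))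

mutual
/-- Number of vertices of a planar representative. -/
def psize : PTree n → ℕ
  | .node l => 1 + psizeL l
def psizeL : List (Fin n × PTree n) → ℕ
  | [] => 0
  | a :: l => psize a.2 + psizeL l
end

noncomputable def wsize (w : List (PlTree n)) : ℕ :=
  (w.map fun t => psize (Quot.out t)).sum


open scoped TensorProduct
open PiTensorProduct

/-- An associative `n`-algebra over `k`: a unital associative `k`-algebra `A`
together with a linear map `α : A^{⊗n} → A`. -/
structure AssocNAlgebra (k : Type) [CommRing k] (n : ℕ) : Type 1 where
  carrier : Type
  [isRing : Ring carrier]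
  [isAlgebra : Algebra k carrier]
  op : (⨂[k]^n carrier) →ₗ[k] carrier

attribute [instance] AssocNAlgebra.isRing AssocNAlgebra.isAlgebra

variable {k}

theorem _root_.List.Forall₂.trans_of_mem {α : Type*} {R : α → α → Prop} {l₁ l₂ l₃ : List α}
    (h : ∀ a ∈ l₁, ∀ b c, R a b → R b c → R a c) (h₁₂ : List.Forall₂ R l₁ l₂)
    (h₂₃ : List.Forall₂ R l₂ l₃) : List.Forall₂ R l₁ l₃ := by
  induction h₁₂ generalizing l₃ with
  | nil => exact h₂₃
  | cons hab _ ih =>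
    cases h₂₃ with
    | cons hbc h₂₃ =>
      exact .cons (h _ List.mem_cons_self _ _ hab hbc)
        (ih (fun a ha => h a (List.mem_cons_of_mem _ ha)) h₂₃)

theorem _root_.List.map_eq_map_of_forall₂ {α β : Type*} {R : α → α → Prop} {f : α → β}
    {l₁ l₂ : List α} (h : ∀ a ∈ l₁, ∀ b, R a b → f a = f b) (h₁₂ : List.Forall₂ R l₁ l₂) :
    l₁.map f = l₂.map f := by
  induction h₁₂ with
  | nil => rfl
  | cons hab _ ih =>
    rw [List.map_cons, List.map_cons, h _ List.mem_cons_self _ hab,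
      ih fun a ha => h a (List.mem_cons_of_mem _ ha)]

def colourForest (l : List (Fin n × PTree n)) (i : Fin n) : List (PTree n) :=
  (l.filter fun p => p.1 = i).map Prod.snd

theorem plEquiv_node_iff {l₁ l₂ : List (Fin n × PTree n)} :
    PlEquiv (.node l₁) (.node l₂) ↔
      ∀ i, List.Forall₂ PlEquiv (colourForest l₁ i) (colourForest l₂ i) :=
  ⟨fun ⟨h⟩ => h, .node⟩

theorem sizeOf_lt_of_mem_colourForest {l : List (Fin n × PTree n)} {i : Fin n} {t : PTree n}
    (ht : t ∈ colourForest l i) : sizeOf t < sizeOf (PTree.node l) := by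
  obtain ⟨p, hp, rfl⟩ := List.mem_map.1 ht
  have := List.sizeOf_lt_of_mem (List.mem_of_mem_filter hp)
  cases p
  simp only [Prod.mk.sizeOf_spec, PTree.node.sizeOf_spec] at *
  omega

theorem PTree.forest_induction {P : PTree n → Prop}
    (h : ∀ l, (∀ i, ∀ t ∈ colourForest l i, P t) → P (.node l)) : ∀ t, P t
  | .node l => h l fun _ t _ => PTree.forest_induction h t
decreasing_by exact sizeOf_lt_of_mem_colourForest ‹_›

theorem PlEquiv.refl : ∀ t : PTree n, PlEquiv t t :=
  PTree.forest_induction fun _ ih => .node fun i => List.forall₂_same.2 (ih i)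

theorem PlEquiv.symm : ∀ {t₁ t₂ : PTree n}, PlEquiv t₁ t₂ → PlEquiv t₂ t₁ := by
  intro t₁
  induction t₁ using PTree.forest_induction with
  | h l ih =>
    rintro _ ⟨hf⟩
    exact .node fun i =>
      (((List.forall₂_and_left _ _).2 ⟨ih i, hf i⟩).imp fun _ _ h => h.1 h.2).flip

theorem PlEquiv.trans :
    ∀ {t₁ t₂ t₃ : PTree n}, PlEquiv t₁ t₂ → PlEquiv t₂ t₃ → PlEquiv t₁ t₃ := by
  intro t₁
  induction t₁ using PTree.forest_induction with
  | h l ih =>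
    rintro _ _ ⟨hf₁₂⟩ ⟨hf₂₃⟩
    exact .node fun i => (hf₁₂ i).trans_of_mem (fun a ha _ _ => ih i a ha) (hf₂₃ i)

theorem plEquiv_equivalence : Equivalence (@PlEquiv n) :=
  ⟨PlEquiv.refl, PlEquiv.symm, PlEquiv.trans⟩

-- `PlTree.mk` and `PlTree.out` are typed by `PlTree n` rather than `Quot PlEquiv`, so that
-- `rw` and `simp` can see through terms such as the one in `pgraftW`.
def PlTree.mk (t : PTree n) : PlTree n := Quot.mk PlEquiv t

noncomputable def PlTree.out (t : PlTree n) : PTree n := Quot.out t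

theorem PlTree.mk_out (t : PlTree n) : PlTree.mk t.out = t :=
  Quot.out_eq t

theorem PlTree.plEquiv_out_mk (t : PTree n) : PlEquiv (PlTree.mk t).out t :=
  plEquiv_equivalence.eqvGen_iff.1 (Quot.eqvGen_exact (PlTree.mk_out _))

theorem colourForest_flatMap {α : Type*} (g : Fin n → List α) (f : α → PTree n) (i : Fin n) :
    colourForest ((List.finRange n).flatMap fun j => (g j).map fun a => (j, f a)) i
      = (g i).map f := by
  rw [← List.flatMap_singleton (fun j => (g j).map f) i, ← List.replicate_one,
    ← List.count_finRange i, ← List.filter_eq]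
  induction List.finRange n with
  | nil => rfl
  | cons j l ih =>
    by_cases h : j = i <;> simp_all [colourForest, List.filter_map, Function.comp_def]

theorem pgraftW_eq_mk (g : Fin n → List (PlTree n)) :
    pgraftW g =
      PlTree.mk (.node ((List.finRange n).flatMap fun i => (g i).map fun t => (i, t.out))) :=
  rfl

theorem pgraftW_colourForest (l : List (Fin n × PTree n)) :
    pgraftW (fun i => (colourForest l i).map PlTree.mk) = PlTree.mk (.node l) := by
  rw [pgraftW_eq_mk]
  refine Quot.sound (plEquiv_node_iff.2 fun i => ?_)
  rw [colourForest_flatMap, List.forall₂_map_left_iff, List.forall₂_map_left_iff]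
  exact List.forall₂_same.2 fun t _ => PlTree.plEquiv_out_mk t

def PTree.eval (B : AssocNAlgebra k n) : PTree n → B.carrier
  | .node l => B.op (tprod k fun i =>
      ((colourForest l i).attach.map fun t => PTree.eval B t.1).prod)
decreasing_by exact sizeOf_lt_of_mem_colourForest t.2

theorem PTree.eval_node (B : AssocNAlgebra k n) (l : List (Fin n × PTree n)) :
    (PTree.node l).eval B =
      B.op (tprod k fun i => ((colourForest l i).map (PTree.eval B)).prod) := by
  rw [PTree.eval]
  simp only [List.attach_map_val]

theorem PTree.eval_congr (B : AssocNAlgebra k n) :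
    ∀ {t₁ t₂ : PTree n}, PlEquiv t₁ t₂ → t₁.eval B = t₂.eval B := by
  intro t₁
  induction t₁ using PTree.forest_induction with
  | h l ih =>
    rintro ⟨l₂⟩ h
    simp only [PTree.eval_node, List.map_eq_map_of_forall₂ (ih _) (plEquiv_node_iff.1 h _)]

def PlTree.eval (B : AssocNAlgebra k n) : PlTree n → B.carrier :=
  Quot.lift (PTree.eval B) fun _ _ => PTree.eval_congr B

theorem PlTree.eval_mk (B : AssocNAlgebra k n) (t : PTree n) : (PlTree.mk t).eval B = t.eval B :=
  rfl

theorem PlTree.eval_pgraftW (B : AssocNAlgebra k n) (g : Fin n → List (PlTree n)) :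
    (pgraftW g).eval B = B.op (tprod k fun i => ((g i).map (PlTree.eval B)).prod) := by
  have h : ∀ t : PlTree n, t.out.eval B = t.eval B := fun t => by
    conv_rhs => rw [← PlTree.mk_out t]
    rfl
  rw [pgraftW_eq_mk, PlTree.eval_mk, PTree.eval_node]
  simp only [colourForest_flatMap, List.map_map, Function.comp_def, h]

theorem _root_.FreeAlgebra.basisFreeMonoid_apply {R X : Type*} [CommSemiring R]
    (w : FreeMonoid X) :
    FreeAlgebra.basisFreeMonoid R X w = (w.toList.map (FreeAlgebra.ι R)).prod := by
  simp [FreeAlgebra.basisFreeMonoid, FreeAlgebra.equivMonoidAlgebraFreeMonoid,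
    FreeMonoid.lift_apply]

theorem _root_.PiTensorProduct.ext_freeAlgebra {ι R X M : Type*} [Finite ι] [CommSemiring R]
    [AddCommMonoid M] [Module R M] {F G : (⨂[R] _ : ι, FreeAlgebra R X) →ₗ[R] M}
    (h : ∀ w : ι → List X, F (tprod R fun i => ((w i).map (FreeAlgebra.ι R)).prod)
      = G (tprod R fun i => ((w i).map (FreeAlgebra.ι R)).prod)) : F = G :=
  (Basis.piTensorProduct fun _ => FreeAlgebra.basisFreeMonoid R X).ext fun w => by
    simpa [FreeAlgebra.basisFreeMonoid_apply] using h fun i => (w i).toList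

noncomputable def graft : (⨂[k]^n (FreeAlgebra k (PlTree n))) →ₗ[k] FreeAlgebra k (PlTree n) :=
  (Basis.piTensorProduct fun _ => FreeAlgebra.basisFreeMonoid k (PlTree n)).constr k
    fun w => FreeAlgebra.ι k (pgraftW fun i => (w i).toList)

theorem graft_tprod_wmon (g : Fin n → List (PlTree n)) :
    graft (tprod k fun i => wmon k (g i)) = FreeAlgebra.ι k (pgraftW g) := by
  simpa [graft, wmon, FreeAlgebra.basisFreeMonoid_apply] using
    (Basis.piTensorProduct fun _ => FreeAlgebra.basisFreeMonoid k (PlTree n)).constr_basis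
      k (fun w => FreeAlgebra.ι k (pgraftW fun i => (w i).toList)) fun i => FreeMonoid.ofList (g i)

section UniversalProperty

variable (B : AssocNAlgebra k n)

def RespectsGraft (f : FreeAlgebra k (PlTree n) →ₐ[k] B.carrier) : Prop :=
  ∀ g : Fin n → List (PlTree n),
    f (FreeAlgebra.ι k (pgraftW g)) =
      B.op (tprod k fun i => ((g i).map (f ∘ FreeAlgebra.ι k)).prod)

theorem comp_graft_eq_iff (f : FreeAlgebra k (PlTree n) →ₐ[k] B.carrier) :
    B.op ∘ₗ PiTensorProduct.map (fun _ : Fin n => f.toLinearMap) = f.toLinearMap ∘ₗ graft ↔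
      RespectsGraft B f := by
  have op_map : ∀ g : Fin n → List (PlTree n),
      (B.op ∘ₗ PiTensorProduct.map fun _ : Fin n => f.toLinearMap)
          (tprod k fun i => wmon k (g i)) =
        B.op (tprod k fun i => ((g i).map (f ∘ FreeAlgebra.ι k)).prod) := fun g => by
    simp [wmon, map_list_prod, List.map_map]
  have comp_graft : ∀ g : Fin n → List (PlTree n),
      (f.toLinearMap ∘ₗ graft) (tprod k fun i => wmon k (g i)) =
        f (FreeAlgebra.ι k (pgraftW g)) := fun g => by
    simp [graft_tprod_wmon]
  refine ⟨fun h g => ?_, fun h => PiTensorProduct.ext_freeAlgebra fun g => ?_⟩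
  · rw [← op_map, ← comp_graft, h]
  · exact (op_map g).trans ((h g).symm.trans (comp_graft g).symm)

theorem respectsGraft_lift_eval : RespectsGraft B (FreeAlgebra.lift k (PlTree.eval B)) := by
  intro g
  simp [PlTree.eval_pgraftW, Function.comp_def]

variable {B} in
theorem RespectsGraft.ext {f₁ f₂ : FreeAlgebra k (PlTree n) →ₐ[k] B.carrier}
    (h₁ : RespectsGraft B f₁) (h₂ : RespectsGraft B f₂) : f₁ = f₂ := by
  suffices h : ∀ t : PTree n,
      f₁ (FreeAlgebra.ι k (PlTree.mk t)) = f₂ (FreeAlgebra.ι k (PlTree.mk t)) from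
    FreeAlgebra.hom_ext (funext (Quot.ind h))
  refine PTree.forest_induction fun l ih => ?_
  rw [← pgraftW_colourForest, h₁, h₂]
  congr 2
  funext i
  simp only [List.map_map]
  exact congrArg List.prod (List.map_congr_left (ih i))

end UniversalProperty

/-- The category of associative `n`-algebras over a field
`k` of characteristic zero has an initial object `(A_n, λ_n)`, where `A_n` is
the free associative (tensor) algebra on planar `n`-trees (rooted trees with
`n`-coloured edges and, at each vertex, a separate linear ordering of the
incoming edges of each colour) and `λ_n` is the grafting operation on
`n`-tuples of ordered forests. -/
theorem freeAlgebra_planar_trees_initial (k : Type) [Field k] [CharZero k] (n : ℕ) :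
    ∃ lam : (⨂[k]^n (FreeAlgebra k (PlTree n))) →ₗ[k] FreeAlgebra k (PlTree n),
      -- `lam` is the grafting operation on ordered forests
      (∀ g : Fin n → List (PlTree n),
        lam (tprod k fun i => wmon k (g i)) = FreeAlgebra.ι k (pgraftW g)) ∧
      -- `(A_n, λ_n)` is initial among associative `n`-algebras
      (∀ B : AssocNAlgebra k n,
        ∃! f : FreeAlgebra k (PlTree n) →ₐ[k] B.carrier,
          B.op ∘ₗ (PiTensorProduct.map fun _ : Fin n => f.toLinearMap)
            = f.toLinearMap ∘ₗ lam) :=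
  ⟨graft, graft_tprod_wmon, fun B => ⟨FreeAlgebra.lift k (PlTree.eval B),
    (comp_graft_eq_iff B _).2 (respectsGraft_lift_eval B),
    fun f hf => ((comp_graft_eq_iff B f).1 hf).ext (respectsGraft_lift_eval B)⟩⟩

end CTrees
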